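/- For every v ∈ (1/2+ℤ≥0)ⁿ₊, one has |v_{1/2}(p_{1/2}(v))| ≤ |v|. -/

import Mathlib

/-! Write the entries of `v` as `(2k - 1)/2` and let `m_k` be the multiplicity of `(2k - 1)/2`
in `v`, so that `p_{1/2}(v) = [ν₁, ν₂, …]` is the decreasing rearrangement of `(m_k)`. Both `v`
and `w = v_{1/2}(p_{1/2}(v))` are weakly decreasing with positive entries, so it suffices to show
`w ≤ v` entrywise, and for this it suffices that for every `K` at most as many entries of `v` as
of `w` lie below `(2K - 1)/2`. These counts are `m₁ + ⋯ + m_{K-1}` and `ν₁ + ⋯ + ν_{K-1}`, and a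
sum of `K - 1` multiplicities is at most the sum of the `K - 1` largest ones. -/

open Finset

/-- A partition of `N`: an antitone function `ℕ → ℕ` (the 0-indexed parts, padded with
zeros) supported on `{0, …, N-1}` whose parts sum to `N`. -/
def IsPartition (N : ℕ) (p : ℕ → ℕ) : Prop :=
  Antitone p ∧ (∀ i, N ≤ i → p i = 0) ∧ ∑ i ∈ Finset.range N, p i = N

/-- Dominance order: `Dominates p q` means `q ≤ p`, i.e. every partial sum of the parts
of `q` is at most the corresponding partial sum of the parts of `p`. -/
def Dominates (p q : ℕ → ℕ) : Prop :=
  ∀ j, ∑ i ∈ Finset.range j, q i ≤ ∑ i ∈ Finset.range j, p i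

/-- Multiplicity of the value `k` among the first `N` parts of `p`. -/
def mult (N : ℕ) (p : ℕ → ℕ) (k : ℕ) : ℕ :=
  ((Finset.range N).filter (fun i => p i = k)).card

/-- Multiplicity of the real value `s` among the entries of the tuple `v`. -/
noncomputable def multR {n : ℕ} (v : Fin n → ℝ) (s : ℝ) : ℕ :=
  {i : Fin n | v i = s}.ncard

/-- Euclidean norm of a real tuple. -/
noncomputable def enormR {n : ℕ} (v : Fin n → ℝ) : ℝ :=
  Real.sqrt (∑ i, (v i) ^ 2)

/-- `IsVHalf n p w` says that the weakly decreasing tuple `w : Fin n → ℝ` is the tuple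
having `ν_k = p (k-1)` entries equal to `(2k-1)/2` for each `k ≥ 1`, where
`p = [ν₁, ν₂, …]` is a partition of `n`. -/
def IsVHalf (n : ℕ) (p : ℕ → ℕ) (w : Fin n → ℝ) : Prop :=
  Antitone w ∧ (∀ i, ∃ k : ℕ, 1 ≤ k ∧ w i = (2 * (k : ℝ) - 1) / 2) ∧
  ∀ k : ℕ, 1 ≤ k → multR w ((2 * (k : ℝ) - 1) / 2) = p (k - 1)

/-- `IsPHalf n v q` says that the partition `q` of `n` is the weakly decreasing
rearrangement of the multiplicity sequence `[m_v(1/2), m_v(3/2), m_v(5/2), …]`. -/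
def IsPHalf (n : ℕ) (v : Fin n → ℝ) (q : ℕ → ℕ) : Prop :=
  IsPartition n q ∧
  ∀ c : ℕ, 1 ≤ c →
    mult n q c = {k : ℕ | 1 ≤ k ∧ multR v ((2 * (k : ℝ) - 1) / 2) = c}.ncard

theorem Finset.sum_eq_sum_Icc_card_le {ι : Type*} (s : Finset ι) (f : ι → ℕ) {N : ℕ}
    (hf : ∀ i ∈ s, f i ≤ N) :
    ∑ i ∈ s, f i = ∑ c ∈ Icc 1 N, #{i ∈ s | c ≤ f i} := by
  simp_rw [card_filter]
  rw [sum_comm]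
  refine sum_congr rfl fun i hi => ?_
  have : {c ∈ Icc 1 N | c ≤ f i} = Icc 1 (f i) := by
    ext c; simp only [mem_filter, mem_Icc]; have := hf i hi; omega
  rw [← card_filter, this, Nat.card_Icc, Nat.add_sub_cancel]

theorem Finset.card_filter_le_eq_of_card_filter_eq {ι κ : Type*} {s : Finset ι} {t : Finset κ}
    {f : ι → ℕ} {g : κ → ℕ} (h : ∀ c, 1 ≤ c → #{i ∈ s | f i = c} = #{k ∈ t | g k = c})
    {c : ℕ} (hc : 1 ≤ c) : #{i ∈ s | c ≤ f i} = #{k ∈ t | c ≤ g k} := by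
  classical
  have hpos : (s.val.map f).filter (0 < ·) = (t.val.map g).filter (0 < ·) := by
    ext c
    rw [Multiset.count_filter, Multiset.count_filter]
    split_ifs with hc
    · have := h c hc
      rw [Multiset.count_map, Multiset.count_map]
      simp only [card_def, filter_val] at this
      simpa only [eq_comm] using this
    · rfl
  have key := congrArg (fun A => Multiset.card (A.filter (c ≤ ·))) hpos
  simp only [Multiset.filter_filter, Multiset.filter_map, Multiset.card_map] at key
  simp only [card_def, filter_val]
  convert key using 3 <;> simp only [Function.comp_apply] <;> omega

theorem Antitone.exists_le_iff_lt {α : Type*} [LinearOrder α] {q : ℕ → α} (hq : Antitone q)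
    {c : α} {n : ℕ} (hn : q n < c) :
    ∃ L ≤ n, ∀ j, c ≤ q j ↔ j < L := by
  classical
  have h : ∃ j, q j < c := ⟨n, hn⟩
  refine ⟨Nat.find h, Nat.find_min' h hn, fun j => ⟨fun hj => ?_, fun hj => ?_⟩⟩
  · by_contra hL
    exact (Nat.find_spec h).not_ge (hj.trans (hq (not_lt.1 hL)))
  · exact not_lt.1 (Nat.find_min h hj)

/-- At each level `c`, `T` has at most `min r #{k ∈ S | c ≤ m k}` values `≥ c`, and this is
exactly the number of such values among the first `r` terms of the antitone `q`. -/
theorem sum_le_sum_range_of_card_filter_eq {ι : Type*} {q : ℕ → ℕ} {m : ι → ℕ} {n r : ℕ}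
    {S T : Finset ι}
    (hq : Antitone q) (hqn : q n = 0)
    (hcount : ∀ c, 1 ≤ c → #{j ∈ range n | q j = c} = #{k ∈ S | m k = c})
    (hTS : ∀ k ∈ T, 0 < m k → k ∈ S) (hT : #T ≤ r) :
    ∑ k ∈ T, m k ≤ ∑ j ∈ range r, q j := by
  set N := T.sup m ⊔ (range r).sup q
  rw [sum_eq_sum_Icc_card_le T m (N := N) fun k hk => le_sup_of_le_left (le_sup hk),
    sum_eq_sum_Icc_card_le (range r) q (N := N) fun j hj => le_sup_of_le_right (le_sup hj)]
  refine sum_le_sum fun c hc => ?_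
  have hc : 1 ≤ c := (mem_Icc.1 hc).1
  obtain ⟨L, hLn, hL⟩ := hq.exists_le_iff_lt (c := c) (n := n) (by omega)
  have hrange : ∀ r', #{j ∈ range r' | c ≤ q j} = min r' L := fun r' => by
    simp only [hL]
    rw [← card_range (min r' L)]
    congr 1
    ext j
    simp
  calc #{k ∈ T | c ≤ m k}
      ≤ min r #{k ∈ S | c ≤ m k} :=
        le_min (card_filter_le _ _ |>.trans hT) (card_le_card fun k hk => by
          simp only [mem_filter] at hk ⊢
          exact ⟨hTS k hk.1 (by omega), hk.2⟩)
    _ = min r #{j ∈ range n | c ≤ q j} := by rw [card_filter_le_eq_of_card_filter_eq hcount hc]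
    _ = #{j ∈ range r | c ≤ q j} := by rw [hrange, hrange, min_eq_right hLn]

theorem le_of_card_filter_lt_le {α : Type*} [LinearOrder α] {n : ℕ} {u w : Fin n → α}
    (hu : Antitone u) (hw : Antitone w) {i : Fin n} (h : #{j | u j < w i} ≤ #{j | w j < w i}) : w i ≤ u i := by
  by_contra! hlt
  have hu_lt : n - i ≤ #{j | u j < w i} := by
    rw [← Fin.card_Ici]
    exact card_le_card fun j hj => by simpa using (hu (mem_Ici.1 hj)).trans_lt hlt
  have hw_lt : #{j | w j < w i} ≤ n - 1 - i := by
    rw [← Fin.card_Ioi]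
    exact card_le_card fun j hj => by
      simp only [mem_filter, mem_univ, true_and] at hj
      exact mem_Ioi.2 (lt_of_not_ge fun hji => hj.not_ge (hw hji))
  have := i.isLt
  omega

noncomputable def oddHalf (k : ℕ) : ℝ := (2 * (k : ℝ) - 1) / 2

theorem oddHalf_strictMono : StrictMono oddHalf := fun j k h => by
  unfold oddHalf
  have : (j : ℝ) < k := by exact_mod_cast h
  linarith

theorem oddHalf_pos {k : ℕ} (hk : 1 ≤ k) : 0 < oddHalf k := by
  unfold oddHalf
  have : (1 : ℝ) ≤ k := by exact_mod_cast hk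
  linarith

theorem multR_eq_card {n : ℕ} (u : Fin n → ℝ) (s : ℝ) : multR u s = #{i | u i = s} := by
  rw [multR, ← Set.ncard_coe_finset, coe_filter]
  simp

theorem card_filter_lt_oddHalf {n : ℕ} {u : Fin n → ℝ} (hu : ∀ i, ∃ k, 1 ≤ k ∧ u i = oddHalf k)
    (K : ℕ) : #{i | u i < oddHalf K} = ∑ k ∈ Ico 1 K, multR u (oddHalf k) := by
  rw [card_eq_sum_card_fiberwise (f := u) (t := (Ico 1 K).image oddHalf),
    sum_image oddHalf_strictMono.injective.injOn]
  · refine sum_congr rfl fun k hk => ?_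
    rw [multR_eq_card, filter_filter]
    congr 1
    refine filter_congr fun i _ => ⟨And.right, fun h => ⟨?_, h⟩⟩
    rw [h]
    exact oddHalf_strictMono (mem_Ico.1 hk).2
  · intro i hi
    obtain ⟨k, hk, hik⟩ := hu i
    simp only [coe_filter, mem_univ, true_and, Set.mem_ofPred_eq, hik] at hi
    simpa [hik] using ⟨k, ⟨hk, oddHalf_strictMono.lt_iff_lt.1 hi⟩, rfl⟩

theorem IsVHalf.sum_multR_Ico {n : ℕ} {q : ℕ → ℕ} {w : Fin n → ℝ} (hw : IsVHalf n q w) (K : ℕ) :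
    ∑ k ∈ Ico 1 K, multR w (oddHalf k) = ∑ j ∈ range (K - 1), q j := by
  rw [sum_Ico_eq_sum_range]
  exact sum_congr rfl fun j _ => by rw [add_comm]; exact hw.2.2 (j + 1) (by omega)

theorem IsPHalf.sum_multR_Ico_le {n : ℕ} {v : Fin n → ℝ} {q : ℕ → ℕ} (hq : IsPHalf n v q)
    (hv : ∀ i, ∃ k, 1 ≤ k ∧ v i = oddHalf k) (K : ℕ) :
    ∑ k ∈ Ico 1 K, multR v (oddHalf k) ≤ ∑ j ∈ range (K - 1), q j := by
  obtain ⟨⟨hq_anti, hq_zero, -⟩, hq_count⟩ := hq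
  choose kv hkv_pos hkv using hv
  have hsupp : ∀ k, 0 < multR v (oddHalf k) → k ∈ univ.image kv := fun k hk => by
    obtain ⟨i, hi⟩ := Set.nonempty_of_ncard_ne_zero hk.ne'
    exact mem_image.2 ⟨i, mem_univ _, oddHalf_strictMono.injective ((hkv i).symm.trans hi)⟩
  refine sum_le_sum_range_of_card_filter_eq hq_anti (hq_zero n le_rfl) (fun c hc => ?_)
    (fun k _ => hsupp k) (Nat.card_Ico 1 K).le
  rw [← mult, hq_count c hc, ← Set.ncard_coe_finset, coe_filter]
  congr 1
  ext k
  refine ⟨fun hk => ⟨hsupp k (hc.trans_eq hk.2.symm), hk.2⟩, fun hk => ⟨?_, hk.2⟩⟩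
  obtain ⟨i, -, rfl⟩ := mem_image.1 hk.1
  exact hkv_pos i

theorem statement13_general (n : ℕ)
    (v : Fin n → ℝ) (hv : Antitone v)
    (hvmem : ∀ i, ∃ k : ℕ, 1 ≤ k ∧ v i = (2 * (k : ℝ) - 1) / 2)
    (q : ℕ → ℕ) (hq : IsPHalf n v q)
    (w : Fin n → ℝ) (hw : IsVHalf n q w) :
    enormR w ≤ enormR v := by
  have hw_mem : ∀ i, ∃ k, 1 ≤ k ∧ w i = oddHalf k := hw.2.1
  have hle : ∀ i, w i ≤ v i := fun i => by
    obtain ⟨k, -, hwk⟩ := hw_mem i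
    refine le_of_card_filter_lt_le hv hw.1 ?_
    rw [hwk, card_filter_lt_oddHalf hvmem, card_filter_lt_oddHalf hw_mem, hw.sum_multR_Ico]
    exact hq.sum_multR_Ico_le hvmem k
  refine Real.sqrt_le_sqrt (sum_le_sum fun i _ => pow_le_pow_left₀ ?_ (hle i) 2)
  obtain ⟨k, hk, hwk⟩ := hw_mem i
  exact hwk ▸ (oddHalf_pos hk).le

/-- For every `v ∈ (1/2+ℤ≥0)ⁿ₊` (weakly decreasing,
with all entries of the form `(2k-1)/2` for `k ≥ 1`), one has
`|v_{1/2}(p_{1/2}(v))| ≤ |v|`. -/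
theorem statement13 (n : ℕ) (hn : 1 ≤ n)
    (v : Fin n → ℝ) (hv : Antitone v)
    (hvmem : ∀ i, ∃ k : ℕ, 1 ≤ k ∧ v i = (2 * (k : ℝ) - 1) / 2)
    (q : ℕ → ℕ) (hq : IsPHalf n v q)
    (w : Fin n → ℝ) (hw : IsVHalf n q w) :
    enormR w ≤ enormR v :=
  statement13_general n v hv hvmem q hq w hw
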